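/- arXiv:1510.04315 — 2 statements merged into one kernel-verified Lean document; each statement's English description precedes it below -/
import Mathlib

section
/- Let z > 0 and let v be a feasible solution of v_i ≥ L_{ij}(z) v_j for all i ≠ j (with v_j > 0). Define the digraph D(v,z) on {1,...,n} with arc (i,j) iff v_i = L_{ij}(z) v_j. Then D(v,z) contains no directed cycle of length 2; i.e., it is impossible that both v_i = L_{ij}(z) v_j and v_j = L_{ji}(z) v_i hold simultaneously. -/
/-- For z > 0 and a feasible positive vector v, the binding-constraint digraph
`D(v,z)` contains no directed 2-cycle: it is impossible that both
`vᵢ = L_{ij}(z)·vⱼ` and `vⱼ = L_{ji}(z)·vᵢ` hold. -/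
theorem no_two_cycle_in_binding_digraph (n : ℕ)
    (A : Fin n → Fin n → ℝ) (hpos : ∀ i j, 0 < A i j)
    (hrec : ∀ i j, A i j * A j i = 1)
    (z : ℝ) (hz : 0 < z)
    (v : Fin n → ℝ) (hv : ∀ j, 0 < v j)
    (hfeas : ∀ i j : Fin n, i ≠ j →
      max (A i j - z) (1 / (A j i + z)) * v j ≤ v i) :
    ∀ i j : Fin n, i ≠ j →
      ¬ (v i = max (A i j - z) (1 / (A j i + z)) * v j ∧
         v j = max (A j i - z) (1 / (A i j + z)) * v i) := by
  intro i j hij ⟨h1, h2⟩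
  set a := A i j with ha
  set b := A j i with hb
  have hab : a * b = 1 := hrec i j
  have hapos : 0 < a := hpos i j
  have hbpos : 0 < b := hpos j i
  have hbz : 0 < b + z := by linarith
  have haz : 0 < a + z := by linarith
  set L : ℝ := max (a - z) (1 / (b + z)) with hL
  set M : ℝ := max (b - z) (1 / (a + z)) with hM
  have hL1 : 1 / (b + z) ≤ L := le_max_right _ _
  have hM1 : 1 / (a + z) ≤ M := le_max_right _ _
  have hL2 : a - z ≤ L := le_max_left _ _
  have hM2 : b - z ≤ M := le_max_left _ _
  have hLpos : 0 < L := lt_of_lt_of_le (by positivity) hL1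
  have hMpos : 0 < M := lt_of_lt_of_le (by positivity) hM1
  -- From v i = L * v j and v j = M * v i: L * M = 1
  have hvi : 0 < v i := hv i
  have hprod : L * M = 1 := by
    have : v i = L * (M * v i) := by rw [← h2]; exact h1
    have h := this
    nlinarith [hvi]
  have hinvb : 1 / (b + z) = 1 / (b + z) := rfl
  have hbzinv : (1 / (b + z)) * (b + z) = 1 := by field_simp
  have hazinv : (1 / (a + z)) * (a + z) = 1 := by field_simp
  rcases max_choice (a - z) (1 / (b + z)) with hLc | hLc <;>
  rcases max_choice (b - z) (1 / (a + z)) with hMc | hMc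
  · -- L = a - z, M = b - z
    have hLp : 0 < a - z := hLc ▸ hLpos
    have hMp : 0 < b - z := hMc ▸ hMpos
    have hp : (a - z) * (b - z) = 1 := by rw [← hLc, ← hMc]; exact hprod
    nlinarith
  · -- L = a - z, M = 1/(a+z): (a-z)/(a+z) = 1 → z = 0
    have hp : (a - z) * (1 / (a + z)) = 1 := by rw [← hLc, ← hMc]; exact hprod
    have : (a - z) * (1 / (a + z)) * (a + z) = 1 * (a + z) := by rw [hp]
    rw [mul_assoc, hazinv] at this
    nlinarith
  · have hp : (1 / (b + z)) * (b - z) = 1 := by rw [← hLc, ← hMc]; exact hprod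
    have : (1 / (b + z)) * (b - z) * (b + z) = 1 * (b + z) := by rw [hp]
    have h' : (1 / (b + z)) * (b + z) * (b - z) = b + z := by linarith [this]; 
    rw [hbzinv] at h'
    nlinarith
  · have hp : (1 / (b + z)) * (1 / (a + z)) = 1 := by rw [← hLc, ← hMc]; exact hprod
    have : (1 / (b + z)) * (1 / (a + z)) * ((b + z) * (a + z)) = 1 * ((b + z) * (a + z)) := by
      rw [hp]
    have h' : (b + z) * (a + z) = 1 := by
      field_simp at this
      nlinarith [this]
    have hzero : z * (a + b + z) = 0 := by linear_combination h' - hab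
    have : 0 < z * (a + b + z) := by positivity
    linarith
end

section
/- Let z > 0 and suppose v with positive entries, v_1 = 1, satisfies v_i ≥ L_{ij}(z) v_j for all i ≠ j, and that the binding-constraint digraph D(v,z) contains a directed cycle (i_1,...,i_s,i_1). Then the product L_{i_1 i_2}(z) L_{i_2 i_3}(z) ⋯ L_{i_s i_1}(z) = 1, and for any z' < z there is no vector u with positive entries satisfying u_i ≥ L_{ij}(z') u_j for all i ≠ j; hence z is the minimal feasible value and v is optimal for the minimax approximation problem. -/
/-- If for z > 0 a feasible normalized positive vector v has a directed cycle in
its binding-constraint digraph, then the product of the `L` values along the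
cycle equals 1, and no z' < z admits any positive feasible vector; hence z is
the minimal feasible (optimal) value. -/
theorem binding_cycle_implies_optimal (n : ℕ) (hn : 0 < n)
    (A : Fin n → Fin n → ℝ) (hpos : ∀ i j, 0 < A i j)
    (hrec : ∀ i j, A i j * A j i = 1)
    (z : ℝ) (hz : 0 < z)
    (v : Fin n → ℝ) (hv : ∀ j, 0 < v j) (hv1 : v ⟨0, hn⟩ = 1)
    (hfeas : ∀ i j : Fin n, i ≠ j →
      max (A i j - z) (1 / (A j i + z)) * v j ≤ v i)
    (s : ℕ) (hs : 2 ≤ s) [NeZero s] (c : Fin s → Fin n) (hc : Function.Injective c)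
    (hcycle : ∀ k : Fin s, v (c k) =
      max (A (c k) (c (k + 1)) - z) (1 / (A (c (k + 1)) (c k) + z)) * v (c (k + 1))) :
    (∏ k : Fin s,
      max (A (c k) (c (k + 1)) - z) (1 / (A (c (k + 1)) (c k) + z)) = 1) ∧
    ∀ z' : ℝ, 0 ≤ z' → z' < z →
      ¬ ∃ u : Fin n → ℝ, (∀ j, 0 < u j) ∧
        ∀ i j : Fin n, i ≠ j →
          max (A i j - z') (1 / (A j i + z')) * u j ≤ u i := by
  have hshift : ∀ f : Fin s → ℝ, ∏ k : Fin s, f (k + 1) = ∏ k : Fin s, f k := by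
    intro f
    exact Fintype.prod_equiv (Equiv.addRight 1) _ _ (fun k => rfl)
  -- positivity of L at level z
  have hLpos : ∀ k : Fin s,
      0 < max (A (c k) (c (k + 1)) - z) (1 / (A (c (k + 1)) (c k) + z)) := by
    intro k
    have h := hpos (c (k + 1)) (c k)
    exact lt_max_of_lt_right (div_pos one_pos (by linarith))
  have hne : ∀ k : Fin s, k ≠ k + 1 := by
    intro k h
    have h1 : (1 : Fin s) = 0 := (add_left_cancel (a := k) (by simpa using h)).symm
    rw [Fin.one_eq_zero_iff] at h1
    omega
  have hprod1 : ∏ k : Fin s,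
      max (A (c k) (c (k + 1)) - z) (1 / (A (c (k + 1)) (c k) + z)) = 1 := by
    have h1 : ∏ k : Fin s, v (c k)
        = (∏ k : Fin s, max (A (c k) (c (k + 1)) - z) (1 / (A (c (k + 1)) (c k) + z)))
          * ∏ k : Fin s, v (c (k + 1)) := by
      rw [← Finset.prod_mul_distrib]
      exact Finset.prod_congr rfl (fun k _ => hcycle k)
    rw [hshift (fun k => v (c k))] at h1
    have hvpos : 0 < ∏ k : Fin s, v (c k) :=
      Finset.prod_pos (fun k _ => hv (c k))
    field_simp at h1
    nlinarith [h1, hvpos]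
  refine ⟨hprod1, ?_⟩
  rintro z' hz'0 hz'z ⟨u, hu, hufeas⟩
  set L' := fun k : Fin s =>
    max (A (c k) (c (k + 1)) - z') (1 / (A (c (k + 1)) (c k) + z')) with hL'
  have hL'pos : ∀ k, 0 < L' k := by
    intro k
    have h := hpos (c (k + 1)) (c k)
    exact lt_max_of_lt_right (div_pos one_pos (by linarith))
  -- strict comparison L < L'
  have hLL' : ∀ k : Fin s,
      max (A (c k) (c (k + 1)) - z) (1 / (A (c (k + 1)) (c k) + z)) < L' k := by
    intro k
    apply max_lt
    · exact lt_max_of_lt_left (by linarith)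
    · refine lt_max_of_lt_right ?_
      have h := hpos (c (k + 1)) (c k)
      apply one_div_lt_one_div_of_lt (by linarith)
      linarith
  -- telescoping at z'
  have h2 : (∏ k : Fin s, L' k) * ∏ k : Fin s, u (c k) ≤ ∏ k : Fin s, u (c k) := by
    have := Finset.prod_le_prod (s := (Finset.univ : Finset (Fin s)))
      (f := fun k => L' k * u (c (k + 1))) (g := fun k => u (c k))
      (fun k _ => le_of_lt (mul_pos (hL'pos k) (hu _)))
      (fun k _ => hufeas (c k) (c (k + 1)) (fun h => hne k (hc h)))
    rw [Finset.prod_mul_distrib, hshift (fun k => u (c k))] at this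
    exact this
  have hupos : 0 < ∏ k : Fin s, u (c k) :=
    Finset.prod_pos (fun k _ => hu (c k))
  have hle1 : ∏ k : Fin s, L' k ≤ 1 :=
    le_of_mul_le_mul_right (by linarith) hupos
  have hgt1 : 1 < ∏ k : Fin s, L' k := by
    calc (1 : ℝ) = ∏ k : Fin s,
        max (A (c k) (c (k + 1)) - z) (1 / (A (c (k + 1)) (c k) + z)) := hprod1.symm
      _ < ∏ k : Fin s, L' k :=
        Finset.prod_lt_prod_of_nonempty (fun k _ => hLpos k) (fun k _ => hLL' k)
          Finset.univ_nonempty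
  linarith
end
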